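/- Let (X_v)_{v∈V} be a family of random variables on a probability space (Ω, 𝓕, P) indexed by a finite set V, each valued in a nonempty finite type, whose conditional independence relation satisfies the intersection property, and let C ∈ V. If M₁ and M₂ are both Markov blankets of C, then M₁ ∩ M₂ is a Markov blanket of C. Consequently, the Markov boundary of C is unique: any two Markov boundaries of C are equal. -/

import Mathlib

open MeasureTheory ProbabilityTheory Set

namespace CFS

variable {V : Type*}

/-- Parents of `v`: vertices with an edge into `v`. -/
def Pa (E : V → V → Prop) (v : V) : Set V := {u | E u v}

/-- Children of `v`: vertices with an edge from `v`. -/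
def Ch (E : V → V → Prop) (v : V) : Set V := {u | E v u}

/-- Descendants of `v`: vertices reachable from `v` by a nonempty directed path. -/
def Desc (E : V → V → Prop) (v : V) : Set V := {u | Relation.TransGen E v u}

/-- Spouses of `v`: the other parents of the children of `v`. -/
def Sp (E : V → V → Prop) (v : V) : Set V := {u | u ≠ v ∧ ∃ w, E u w ∧ E v w}

/-- The Markov blanket set `mb(v)` in the graph: parents, children and spouses. -/
def mb (E : V → V → Prop) (v : V) : Set V := Pa E v ∪ Ch E v ∪ Sp E v

/-- The edge relation is acyclic (defines a DAG). -/
def Acyclic (E : V → V → Prop) : Prop := ∀ v, ¬ Relation.TransGen E v v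

/-- Adjacency: an edge in either direction. -/
def Adj (E : V → V → Prop) (u v : V) : Prop := E u v ∨ E v u

/-- `f 0, f 1, …, f n` is an undirected path between `i` and `j`:
distinct vertices, consecutive ones adjacent. -/
structure IsUPath (E : V → V → Prop) (i j : V) (n : ℕ) (f : ℕ → V) : Prop where
  pos : 0 < n
  start : f 0 = i
  finish : f n = j
  inj : ∀ s ≤ n, ∀ t ≤ n, f s = f t → s = t
  adj : ∀ t < n, Adj E (f t) (f (t + 1))

/-- The interior vertex at position `t` of the path `f` is a collider:
both incident edges of the path point into it. -/
def ColliderAt (E : V → V → Prop) (f : ℕ → V) (t : ℕ) : Prop :=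
  E (f (t - 1)) (f t) ∧ E (f (t + 1)) (f t)

/-- The path `f 0, …, f n` is blocked by `S`: some interior non-collider lies in `S`,
or some interior collider is such that neither it nor any of its descendants lies in `S`. -/
def Blocked (E : V → V → Prop) (S : Set V) (n : ℕ) (f : ℕ → V) : Prop :=
  ∃ t, 0 < t ∧ t < n ∧
    ((¬ ColliderAt E f t ∧ f t ∈ S) ∨
      (ColliderAt E f t ∧ f t ∉ S ∧ ∀ d ∈ Desc E (f t), d ∉ S))

/-- `i` and `j` are d-separated by `S`: every undirected path between them is blocked by `S`. -/
def DSep (E : V → V → Prop) (i j : V) (S : Set V) : Prop :=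
  ∀ n f, IsUPath E i j n f → Blocked E S n f

/-- The sets `A` and `B` are d-separated by `S`. -/
def DSepSet (E : V → V → Prop) (A B S : Set V) : Prop :=
  ∀ i ∈ A, ∀ j ∈ B, DSep E i j S

variable {Ω Val : Type*} [mΩ : MeasurableSpace Ω] [MeasurableSpace Val]

/-- The σ-algebra generated by the family of random variables `(X v)_{v ∈ A}`. -/
def famSigma (X : V → Ω → Val) (A : Set V) : MeasurableSpace Ω :=
  ⨆ v ∈ A, MeasurableSpace.comap (X v) inferInstance

theorem famSigma_le {X : V → Ω → Val} (hX : ∀ v, Measurable (X v)) (A : Set V) :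
    famSigma X A ≤ mΩ :=
  iSup₂_le fun v _ => (hX v).comap_le

/-- The families `(X a)_{a ∈ A}` and `(X b)_{b ∈ B}` are conditionally independent
given the family `(X s)_{s ∈ S}`. -/
def CondIndepFam [StandardBorelSpace Ω] (X : V → Ω → Val) (hX : ∀ v, Measurable (X v))
    (P : Measure Ω) [IsFiniteMeasure P] (S A B : Set V) : Prop :=
  CondIndep (famSigma X S) (famSigma X A) (famSigma X B) (famSigma_le hX S) P

/-- The Markov condition: every variable is conditionally independent of its
non-descendants (other than itself and its parents) given its parents. -/
def MarkovCondition [StandardBorelSpace Ω] (E : V → V → Prop) (X : V → Ω → Val)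
    (hX : ∀ v, Measurable (X v)) (P : Measure Ω) [IsFiniteMeasure P] : Prop :=
  ∀ v, CondIndepFam X hX P (Pa E v) {v} (univ \ ({v} ∪ Desc E v ∪ Pa E v))

/-- `M ⊆ V \ {C}` is a Markov blanket of `C`: conditioned on `(X m)_{m ∈ M}`,
all other variables are independent of `X C`. -/
def IsMarkovBlanket [StandardBorelSpace Ω] (X : V → Ω → Val) (hX : ∀ v, Measurable (X v))
    (P : Measure Ω) [IsFiniteMeasure P] (C : V) (M : Set V) : Prop :=
  C ∉ M ∧ CondIndepFam X hX P M {C} (univ \ (M ∪ {C}))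

/-- A Markov boundary of `C` is a Markov blanket of `C` no proper subset of which
is a Markov blanket of `C`. -/
def IsMarkovBoundary [StandardBorelSpace Ω] (X : V → Ω → Val) (hX : ∀ v, Measurable (X v))
    (P : Measure Ω) [IsFiniteMeasure P] (C : V) (M : Set V) : Prop :=
  IsMarkovBlanket X hX P C M ∧ ∀ M' ⊂ M, ¬ IsMarkovBlanket X hX P C M'

/-- Faithfulness: conditional independence holds exactly when d-separation holds. -/
def Faithful [StandardBorelSpace Ω] (E : V → V → Prop) (X : V → Ω → Val)
    (hX : ∀ v, Measurable (X v)) (P : Measure Ω) [IsFiniteMeasure P] : Prop :=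
  ∀ A B S : Set V, A.Nonempty → B.Nonempty →
    Disjoint A B → Disjoint A S → Disjoint B S →
    (CondIndepFam X hX P S A B ↔ DSepSet E A B S)

/-- `v` is strongly relevant to `C`: `X C` and `X v` are not conditionally independent
given all the remaining variables. -/
def StronglyRelevant [StandardBorelSpace Ω] (X : V → Ω → Val) (hX : ∀ v, Measurable (X v))
    (P : Measure Ω) [IsFiniteMeasure P] (C v : V) : Prop :=
  ¬ CondIndepFam X hX P (univ \ {C, v}) {C} {v}

end CFS

open CFS

/-- The conditional independence relation of the family satisfies the intersection
property. -/
def IntersectionProperty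
    {V Ω Val : Type*} [MeasurableSpace Ω] [StandardBorelSpace Ω] [MeasurableSpace Val]
    (X : V → Ω → Val) (hX : ∀ v, Measurable (X v))
    (P : MeasureTheory.Measure Ω) [MeasureTheory.IsFiniteMeasure P] : Prop :=
  ∀ A B D S : Set V, A.Nonempty → B.Nonempty → D.Nonempty →
    Disjoint A B → Disjoint A D → Disjoint A S →
    Disjoint B D → Disjoint B S → Disjoint D S →
    CondIndepFam X hX P (S ∪ D) A B → CondIndepFam X hX P (S ∪ B) A D →
    CondIndepFam X hX P S A (B ∪ D)

/-! Weak union holds for every conditional independence relation of σ-algebras: if `m₁` is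
independent of `m₂ ⊔ m₃` given `m'`, then `μ⟦t | m' ⊔ m₂ ⊔ m₃⟧ = μ⟦t | m'⟧` for `t ∈ m₁`, and
conditioning this on `m' ⊔ m₃` instead gives `m₁ ⫫ m₂ | m' ⊔ m₃`. Write `S = M₁ ∩ M₂`,
`B = M₁ \ M₂` and `D` for the complement of `M₁ ∪ {C}`. The blanket `M₁ = S ∪ B` gives
`C ⫫ D | S ∪ B`; the blanket `M₂`, by weak union, gives `C ⫫ B | S ∪ D`. The intersection
property combines them into `C ⫫ B ∪ D | S`, i.e. `S` is a blanket. Two Markov boundaries then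
both contain their intersection as a blanket, so by minimality they are equal. -/

section WeakUnion

variable {Ω : Type*} {m' m₁ m₂ m₃ : MeasurableSpace Ω}

theorem MeasurableSpace.sup_eq_generateFrom_image2_inter (m₁ m₂ : MeasurableSpace Ω) :
    m₁ ⊔ m₂ = generateFrom
      (image2 (· ∩ ·) {s | MeasurableSet[m₁] s} {t | MeasurableSet[m₂] t}) := by
  refine le_antisymm (sup_le (fun s hs => ?_) (fun t ht => ?_)) (generateFrom_le ?_)
  · exact measurableSet_generateFrom ⟨s, hs, univ, MeasurableSet.univ, inter_univ s⟩
  · exact measurableSet_generateFrom ⟨univ, MeasurableSet.univ, t, ht, univ_inter t⟩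
  · rintro _ ⟨s, hs, t, ht, rfl⟩
    exact (le_sup_left (a := m₁) s hs).inter (le_sup_right (a := m₁) t ht)

theorem isPiSystem_image2_inter (m₁ m₂ : MeasurableSpace Ω) :
    IsPiSystem (image2 (· ∩ ·) {s | MeasurableSet[m₁] s} {t | MeasurableSet[m₂] t}) := by
  rintro _ ⟨s, hs, t, ht, rfl⟩ _ ⟨s', hs', t', ht', rfl⟩ -
  exact ⟨s ∩ s', hs.inter hs', t ∩ t', ht.inter ht', inter_inter_inter_comm s s' t t'⟩

theorem mul_indicator_one_eq_indicator (g : Ω → ℝ) (s : Set Ω) :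
    g * s.indicator (fun _ => 1) = s.indicator g := by
  funext ω
  by_cases hω : ω ∈ s <;> simp [hω]

variable [mΩ : MeasurableSpace Ω] [StandardBorelSpace Ω] {μ : Measure Ω} [IsFiniteMeasure μ]

namespace ProbabilityTheory.CondIndep

theorem setIntegral_inter_condExp_indicator (hm' : m' ≤ mΩ) (hm₁ : m₁ ≤ mΩ)
    (hm₂ : m₂ ≤ mΩ) (h : CondIndep m' m₁ m₂ hm' μ) {t u v : Set Ω} (ht : MeasurableSet[m₁] t)
    (hu : MeasurableSet[m'] u) (hv : MeasurableSet[m₂] v) :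
    ∫ x in u ∩ v, (μ⟦t | m'⟧) x ∂μ = ∫ x in u ∩ v, t.indicator (fun _ => (1 : ℝ)) x ∂μ := by
  have htΩ := hm₁ t ht
  have hvΩ := hm₂ v hv
  have hmul_int : Integrable (μ⟦t | m'⟧ * v.indicator fun _ => (1 : ℝ)) μ := by
    rw [mul_indicator_one_eq_indicator]
    exact integrable_condExp.indicator hvΩ
  calc ∫ x in u ∩ v, (μ⟦t | m'⟧) x ∂μ
      = ∫ x in u, (μ⟦t | m'⟧ * v.indicator fun _ => (1 : ℝ)) x ∂μ := by
        rw [mul_indicator_one_eq_indicator, setIntegral_indicator hvΩ]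
    _ = ∫ x in u, μ[μ⟦t | m'⟧ * v.indicator fun _ => (1 : ℝ) | m'] x ∂μ :=
        (setIntegral_condExp hm' hmul_int hu).symm
    _ = ∫ x in u, (μ⟦t ∩ v | m'⟧) x ∂μ := by
        refine setIntegral_congr_ae (hm' u hu) ?_
        filter_upwards [condExp_mul_of_stronglyMeasurable_left stronglyMeasurable_condExp
          hmul_int ((integrable_const 1).indicator hvΩ),
          (condIndep_iff m' m₁ m₂ hm' hm₁ hm₂ μ).mp h t v ht hv] with ω hmul hprod _
        rw [hmul, hprod]
    _ = ∫ x in u ∩ v, t.indicator (fun _ => (1 : ℝ)) x ∂μ := by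
        rw [setIntegral_condExp hm' ((integrable_const 1).indicator (htΩ.inter hvΩ)) hu,
          inter_comm t v, ← indicator_indicator, setIntegral_indicator hvΩ]

theorem setIntegral_condExp_indicator_of_measurableSet_sup (hm' : m' ≤ mΩ)
    (hm₁ : m₁ ≤ mΩ) (hm₂ : m₂ ≤ mΩ) (h : CondIndep m' m₁ m₂ hm' μ) {t s : Set Ω}
    (ht : MeasurableSet[m₁] t) (hs : MeasurableSet[m' ⊔ m₂] s) :
    ∫ x in s, (μ⟦t | m'⟧) x ∂μ = ∫ x in s, t.indicator (fun _ => (1 : ℝ)) x ∂μ := by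
  have hsup : m' ⊔ m₂ ≤ mΩ := sup_le hm' hm₂
  have ht_int : Integrable (t.indicator fun _ => (1 : ℝ)) μ :=
    (integrable_const 1).indicator (hm₁ t ht)
  induction s, hs using MeasurableSpace.induction_on_inter
    (MeasurableSpace.sup_eq_generateFrom_image2_inter m' m₂) (isPiSystem_image2_inter m' m₂) with
  | empty => simp
  | basic _ huv =>
    obtain ⟨u, hu, v, hv, rfl⟩ := huv
    exact h.setIntegral_inter_condExp_indicator hm' hm₁ hm₂ ht hu hv
  | compl s hs heq =>
    rw [setIntegral_compl (hsup s hs) integrable_condExp, setIntegral_compl (hsup s hs) ht_int,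
      integral_condExp hm', heq]
  | iUnion g hdisj hg heq =>
    have hgΩ i := hsup _ (hg i)
    rw [integral_iUnion hgΩ hdisj integrable_condExp.integrableOn,
      integral_iUnion hgΩ hdisj ht_int.integrableOn]
    exact tsum_congr heq

theorem condExp_indicator_sup_ae_eq (hm' : m' ≤ mΩ) (hm₁ : m₁ ≤ mΩ) (hm₂ : m₂ ≤ mΩ)
    (h : CondIndep m' m₁ m₂ hm' μ) {t : Set Ω} (ht : MeasurableSet[m₁] t) :
    μ⟦t | m' ⊔ m₂⟧ =ᵐ[μ] μ⟦t | m'⟧ :=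
  (ae_eq_condExp_of_forall_setIntegral_eq (sup_le hm' hm₂)
    ((integrable_const 1).indicator (hm₁ t ht)) (fun _ _ _ => integrable_condExp.integrableOn)
    (fun _ hs _ => h.setIntegral_condExp_indicator_of_measurableSet_sup hm' hm₁ hm₂ ht hs)
    (StronglyMeasurable.aestronglyMeasurable (μ := μ)
      (stronglyMeasurable_condExp.mono le_sup_left))).symm

theorem weakUnion (hm' : m' ≤ mΩ) (hm₁ : m₁ ≤ mΩ)
    (hm₂ : m₂ ≤ mΩ) (hm₃ : m₃ ≤ mΩ) (h : CondIndep m' m₁ (m₂ ⊔ m₃) hm' μ) :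
    CondIndep (m' ⊔ m₃) m₁ m₂ (sup_le hm' hm₃) μ := by
  rw [condIndep_iff _ _ _ _ hm₁ hm₂]
  intro t₁ t₂ ht₁ ht₂
  have hle : m' ⊔ m₃ ≤ m' ⊔ (m₂ ⊔ m₃) := sup_le_sup_left le_sup_right m'
  have hfull : m' ⊔ (m₂ ⊔ m₃) ≤ mΩ := sup_le hm' (sup_le hm₂ hm₃)
  have ht₂Ω := hm₂ t₂ ht₂
  set g := μ⟦t₁ | m'⟧
  have hg : StronglyMeasurable[m' ⊔ m₃] g := stronglyMeasurable_condExp.mono le_sup_left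
  have hfull_eq : μ⟦t₁ | m' ⊔ (m₂ ⊔ m₃)⟧ =ᵐ[μ] g :=
    h.condExp_indicator_sup_ae_eq hm' hm₁ (sup_le hm₂ hm₃) ht₁
  have hg_int : Integrable (g * t₂.indicator fun _ => (1 : ℝ)) μ := by
    rw [mul_indicator_one_eq_indicator]
    exact integrable_condExp.indicator ht₂Ω
  have hinter : μ⟦t₁ ∩ t₂ | m' ⊔ (m₂ ⊔ m₃)⟧ =ᵐ[μ] g * t₂.indicator fun _ => (1 : ℝ) := by
    rw [inter_comm, ← indicator_indicator, mul_indicator_one_eq_indicator]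
    filter_upwards [condExp_indicator ((integrable_const (1 : ℝ)).indicator (hm₁ t₁ ht₁))
      ((le_sup_left.trans le_sup_right : m₂ ≤ m' ⊔ (m₂ ⊔ m₃)) t₂ ht₂), hfull_eq]
      with ω hω hωg
    by_cases hω₂ : ω ∈ t₂ <;> simp [hω, hω₂, hωg]
  calc μ⟦t₁ ∩ t₂ | m' ⊔ m₃⟧
      =ᵐ[μ] μ[μ⟦t₁ ∩ t₂ | m' ⊔ (m₂ ⊔ m₃)⟧ | m' ⊔ m₃] := (condExp_condExp_of_le hle hfull).symm
    _ =ᵐ[μ] μ[g * t₂.indicator fun _ => (1 : ℝ) | m' ⊔ m₃] := condExp_congr_ae hinter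
    _ =ᵐ[μ] g * μ⟦t₂ | m' ⊔ m₃⟧ :=
      condExp_mul_of_stronglyMeasurable_left hg hg_int ((integrable_const 1).indicator ht₂Ω)
    _ =ᵐ[μ] μ⟦t₁ | m' ⊔ m₃⟧ * μ⟦t₂ | m' ⊔ m₃⟧ := by
      refine Filter.EventuallyEq.mul ?_ Filter.EventuallyEq.rfl
      calc g = μ[g | m' ⊔ m₃] := (condExp_of_stronglyMeasurable (sup_le hm' hm₃) hg
            integrable_condExp).symm
        _ =ᵐ[μ] μ[μ⟦t₁ | m' ⊔ (m₂ ⊔ m₃)⟧ | m' ⊔ m₃] := condExp_congr_ae hfull_eq.symm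
        _ =ᵐ[μ] μ⟦t₁ | m' ⊔ m₃⟧ := condExp_condExp_of_le hle hfull

end ProbabilityTheory.CondIndep

end WeakUnion

namespace CFS

theorem famSigma_union {V Ω Val : Type*} [MeasurableSpace Val] (X : V → Ω → Val)
    (A B : Set V) : famSigma X (A ∪ B) = famSigma X A ⊔ famSigma X B :=
  iSup_union

variable {V Ω Val : Type*} [MeasurableSpace Ω] [StandardBorelSpace Ω] [MeasurableSpace Val]
  {X : V → Ω → Val} {hX : ∀ v, Measurable (X v)} {P : Measure Ω} [IsFiniteMeasure P]

theorem CondIndepFam.weakUnion {S A B W : Set V} (h : CondIndepFam X hX P S A (B ∪ W)) :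
    CondIndepFam X hX P (S ∪ W) A B := by
  simp only [CondIndepFam, famSigma_union] at h ⊢
  exact h.weakUnion _ (famSigma_le hX A) (famSigma_le hX B) (famSigma_le hX W)

theorem _root_.IntersectionProperty.condIndepFam_union (hInt : IntersectionProperty X hX P)
    {A B D S : Set V} (hA : A.Nonempty) (hAB : Disjoint A B) (hAD : Disjoint A D)
    (hAS : Disjoint A S) (hBD : Disjoint B D) (hBS : Disjoint B S) (hDS : Disjoint D S)
    (hAB_SD : CondIndepFam X hX P (S ∪ D) A B) (hAD_SB : CondIndepFam X hX P (S ∪ B) A D) :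
    CondIndepFam X hX P S A (B ∪ D) := by
  rcases B.eq_empty_or_nonempty with rfl | hB
  · simpa using hAD_SB
  rcases D.eq_empty_or_nonempty with rfl | hD
  · simpa using hAB_SD
  exact hInt A B D S hA hB hD hAB hAD hAS hBD hBS hDS hAB_SD hAD_SB

variable {C : V}

theorem IsMarkovBlanket.inter (hInt : IntersectionProperty X hX P) {M₁ M₂ : Set V}
    (h₁ : IsMarkovBlanket X hX P C M₁) (h₂ : IsMarkovBlanket X hX P C M₂) :
    IsMarkovBlanket X hX P C (M₁ ∩ M₂) := by
  obtain ⟨hC₁, hM₁⟩ := h₁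
  obtain ⟨hC₂, hM₂⟩ := h₂
  refine ⟨fun hC => hC₁ hC.1, ?_⟩
  have hrest : CondIndepFam X hX P (M₁ ∩ M₂ ∪ M₁ \ M₂) {C} (univ \ (M₁ ∪ {C})) := by
    rwa [inter_union_sdiff]
  have hdiff : CondIndepFam X hX P (M₁ ∩ M₂ ∪ univ \ (M₁ ∪ {C})) {C} (M₁ \ M₂) := by
    have hsplit : univ \ (M₂ ∪ {C}) = M₁ \ M₂ ∪ univ \ (M₁ ∪ M₂ ∪ {C}) := by
      ext x; grind
    have hcond : M₂ ∪ univ \ (M₁ ∪ M₂ ∪ {C}) = M₁ ∩ M₂ ∪ univ \ (M₁ ∪ {C}) := by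
      ext x; grind
    rw [hsplit] at hM₂
    rw [← hcond]
    exact hM₂.weakUnion
  have hunion : M₁ \ M₂ ∪ univ \ (M₁ ∪ {C}) = univ \ (M₁ ∩ M₂ ∪ {C}) := by
    ext x; grind
  rw [← hunion]
  refine hInt.condIndepFam_union (singleton_nonempty C) ?_ ?_ ?_ ?_ ?_ ?_ hdiff hrest
  all_goals rw [Set.disjoint_left]; intro x; grind

theorem IsMarkovBoundary.eq_of_subset {M M' : Set V} (hM : IsMarkovBoundary X hX P C M)
    (hM' : IsMarkovBlanket X hX P C M') (hsub : M' ⊆ M) : M' = M :=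
  by_contra fun hne => hM.2 M' (hsub.ssubset_of_ne hne) hM'

theorem IsMarkovBoundary.unique (hInt : IntersectionProperty X hX P) {M₁ M₂ : Set V}
    (h₁ : IsMarkovBoundary X hX P C M₁) (h₂ : IsMarkovBoundary X hX P C M₂) : M₁ = M₂ := by
  have hinter := h₁.1.inter hInt h₂.1
  exact (h₁.eq_of_subset hinter inter_subset_left).symm.trans
    (h₂.eq_of_subset hinter inter_subset_right)

end CFS

theorem stmt_12_general
    {V Ω Val : Type*} [MeasurableSpace Ω] [StandardBorelSpace Ω]
    [MeasurableSpace Val]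
    (X : V → Ω → Val) (hX : ∀ v, Measurable (X v))
    (P : MeasureTheory.Measure Ω) [MeasureTheory.IsProbabilityMeasure P]
    (hInt : IntersectionProperty X hX P) (C : V) :
    (∀ M₁ M₂ : Set V, IsMarkovBlanket X hX P C M₁ → IsMarkovBlanket X hX P C M₂ →
      IsMarkovBlanket X hX P C (M₁ ∩ M₂)) ∧
    (∀ M₁ M₂ : Set V, IsMarkovBoundary X hX P C M₁ → IsMarkovBoundary X hX P C M₂ →
      M₁ = M₂) :=
  ⟨fun _ _ h₁ h₂ => h₁.inter hInt h₂, fun _ _ h₁ h₂ => h₁.unique hInt h₂⟩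

/-- Under the intersection property, the intersection of two Markov blankets of `C`
is a Markov blanket of `C`; consequently the Markov boundary of `C` is unique. -/
theorem stmt_12
    {V Ω Val : Type*} [Fintype V] [MeasurableSpace Ω] [StandardBorelSpace Ω]
    [MeasurableSpace Val] [DiscreteMeasurableSpace Val] [Fintype Val] [Nonempty Val]
    (X : V → Ω → Val) (hX : ∀ v, Measurable (X v))
    (P : MeasureTheory.Measure Ω) [MeasureTheory.IsProbabilityMeasure P]
    (hInt : IntersectionProperty X hX P) (C : V) :
    (∀ M₁ M₂ : Set V, IsMarkovBlanket X hX P C M₁ → IsMarkovBlanket X hX P C M₂ →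
      IsMarkovBlanket X hX P C (M₁ ∩ M₂)) ∧
    (∀ M₁ M₂ : Set V, IsMarkovBoundary X hX P C M₁ → IsMarkovBoundary X hX P C M₂ →
      M₁ = M₂) :=
  stmt_12_general X hX P hInt C
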